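/- If a behavior tree Ti is a subtree of T0 and its influence region Ii is empty, then changing the implementation of (ui, ri) does not change u0(x) for any x ∈ X; i.e., the root controller u0 is independent of the subtree Ti. -/
import Mathlib


/-- Return status of a behavior tree: Running, Success, or Failure. -/
inductive BTStatus where
  | Run | Succ | Fail
deriving DecidableEq

/-- Direction to a child in a binary interior node. -/
inductive BTDir where
  | left | right
deriving DecidableEq

/-- Behavior trees: leaves carry a controller `u : X → U` and a return-status
function `r : X → {R, S, F}`; interior nodes are binary Sequence and Fallback. -/
inductive BTree (X U : Type*) where
  | leaf (u : X → U) (r : X → BTStatus)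
  | seq (t1 t2 : BTree X U)
  | fall (t1 t2 : BTree X U)

namespace BTree
variable {X U : Type*}

/-- Return-status function of a tree (Sequence: run second child iff first
succeeds; Fallback: run second child iff first fails). -/
def ret : BTree X U → X → BTStatus
  | .leaf _ r, x => r x
  | .seq t1 t2, x => if t1.ret x = .Succ then t2.ret x else t1.ret x
  | .fall t1 t2, x => if t1.ret x = .Fail then t2.ret x else t1.ret x

/-- Controller of a tree. -/
def ctrl : BTree X U → X → U
  | .leaf u _, x => u x
  | .seq t1 t2, x => if t1.ret x = .Succ then t2.ctrl x else t1.ctrl x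
  | .fall t1 t2, x => if t1.ret x = .Fail then t2.ctrl x else t1.ctrl x

/-- Success region. -/
def Sreg (t : BTree X U) : Set X := {x | t.ret x = .Succ}
/-- Failure region. -/
def Freg (t : BTree X U) : Set X := {x | t.ret x = .Fail}
/-- Running region. -/
def Rreg (t : BTree X U) : Set X := {x | t.ret x = .Run}

/-- The subtree at a given path (if the path is valid). -/
def sub : BTree X U → List BTDir → Option (BTree X U)
  | t, [] => some t
  | .leaf _ _, _ :: _ => none
  | .seq t1 _, .left :: p => t1.sub p
  | .seq _ t2, .right :: p => t2.sub p
  | .fall t1 _, .left :: p => t1.sub p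
  | .fall _ t2, .right :: p => t2.sub p

/-- Influence region of the subtree at a path, given the influence region `I0`
of the root: the leftmost child inherits its parent's influence region; a right
child of a Sequence (resp. Fallback) gets its left sibling's influence region
intersected with the sibling's success (resp. failure) region. -/
def infl : BTree X U → Set X → List BTDir → Set X
  | _, I0, [] => I0
  | .leaf _ _, I0, _ :: _ => I0
  | .seq t1 _, I0, .left :: p => t1.infl I0 p
  | .seq t1 t2, I0, .right :: p => t2.infl (I0 ∩ t1.Sreg) p
  | .fall t1 _, I0, .left :: p => t1.infl I0 p
  | .fall t1 t2, I0, .right :: p => t2.infl (I0 ∩ t1.Freg) p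

/-- Operating region `Ωᵢ = Iᵢ ∩ Rᵢ` of the subtree at a path (root influence
region `I0 = X`); empty for an invalid path. -/
def opReg (t : BTree X U) (p : List BTDir) : Set X :=
  match t.sub p with
  | some s => t.infl Set.univ p ∩ s.Rreg
  | none => ∅

/-- Paths to all the leaves of a tree. -/
def leafPaths : BTree X U → List (List BTDir)
  | .leaf _ _ => [[]]
  | .seq t1 t2 => t1.leafPaths.map (.left :: ·) ++ t2.leafPaths.map (.right :: ·)
  | .fall t1 t2 => t1.leafPaths.map (.left :: ·) ++ t2.leafPaths.map (.right :: ·)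

end BTree

/-- Replace the subtree at a path (no change if the path is invalid). -/
def BTree.replace {X U : Type*} : BTree X U → List BTDir → BTree X U → BTree X U
  | _, [], s => s
  | .leaf u r, _ :: _, _ => .leaf u r
  | .seq t1 t2, .left :: p, s => .seq (t1.replace p s) t2
  | .seq t1 t2, .right :: p, s => .seq t1 (t2.replace p s)
  | .fall t1 t2, .left :: p, s => .fall (t1.replace p s) t2
  | .fall t1 t2, .right :: p, s => .fall t1 (t2.replace p s)

private lemma BTree.key {X U : Type*} (p : List BTDir) :
    ∀ (t : BTree X U) (I : Set X) (s : BTree X U) (x : X),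
      x ∉ t.infl I p → x ∈ I →
      (t.replace p s).ctrl x = t.ctrl x ∧ (t.replace p s).ret x = t.ret x := by
  induction p with
  | nil => intro t I s x hni hin; rw [BTree.infl] at hni; exact absurd hin hni
  | cons d p ih =>
    intro t I s x hni hin
    cases t with
    | leaf u r => exact ⟨rfl, rfl⟩
    | seq t1 t2 =>
      cases d with
      | left =>
        obtain ⟨hc, hr⟩ := ih t1 I s x (by rwa [BTree.infl] at hni) hin
        constructor <;> simp [BTree.replace, BTree.ctrl, BTree.ret, hc, hr]
      | right =>
        by_cases h1 : t1.ret x = .Succ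
        · obtain ⟨hc, hr⟩ := ih t2 (I ∩ t1.Sreg) s x (by rwa [BTree.infl] at hni) ⟨hin, h1⟩
          constructor <;> simp [BTree.replace, BTree.ctrl, BTree.ret, h1, hc, hr]
        · constructor <;> simp [BTree.replace, BTree.ctrl, BTree.ret, h1]
    | fall t1 t2 =>
      cases d with
      | left =>
        obtain ⟨hc, hr⟩ := ih t1 I s x (by rwa [BTree.infl] at hni) hin
        constructor <;> simp [BTree.replace, BTree.ctrl, BTree.ret, hc, hr]
      | right =>
        by_cases h1 : t1.ret x = .Fail
        · obtain ⟨hc, hr⟩ := ih t2 (I ∩ t1.Freg) s x (by rwa [BTree.infl] at hni) ⟨hin, h1⟩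
          constructor <;> simp [BTree.replace, BTree.ctrl, BTree.ret, h1, hc, hr]
        · constructor <;> simp [BTree.replace, BTree.ctrl, BTree.ret, h1]

/-- if the influence region of the subtree at path `p` is empty,
then changing the implementation of that subtree (replacing it by any tree `s`)
does not change the root controller `u0` at any state `x ∈ X`. -/
theorem empty_influence_no_effect {X U : Type*} (t : BTree X U) (p : List BTDir)
    (hI : t.infl Set.univ p = ∅) (s : BTree X U) :
    (t.replace p s).ctrl = t.ctrl := by
  funext x
  exact (BTree.key p t Set.univ s x (by simp [hI]) trivial).1
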